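/- arXiv:2006.07799 — 7 statements merged into one kernel-verified Lean document; each statement's English description precedes it below -/
import Mathlib

section
/- Let l, r ≥ 0 be integers with l + r > 0, and let the coefficients a_k for -l ≤ k ≤ r be defined by a_k = -((-1)^k / k) · (l!·r!)/((l+k)!·(r-k)!) for k ≠ 0 and a_0 = -Σ_{-l ≤ ν ≤ r, ν ≠ 0} 1/ν. Then for every polynomial P with real coefficients of degree at most l + r, one has Σ_{k=-l}^{r} a_k · P(k) = P'(0). In other words, these coefficients give the finite-difference approximation of the first derivative with optimal order of accuracy l + r on the stencil {-l, …, r}. -/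
/-!
By Lagrange interpolation on the nodes `-l, …, r`, every `P` of degree at most `l + r` satisfies
`P'(0) = ∑ₖ P(k) Lₖ'(0)`, so it suffices to show `Lₖ'(0) = aₖ`. Write `Lₖ = wₖ ∏_{j ≠ k} (X - j)`.
For `k ≠ 0` the node `0` is a simple root of `Lₖ`, so `Lₖ'(0)` is `wₖ` times the product of the
other factors at `0`; both this product and `wₖ⁻¹ = ∏_{j ≠ k} (k - j)` are signed products of
two factorials. For `k = 0` the logarithmic derivative of `L₀` at its own node is
`∑_{j ≠ 0} 1 / (0 - j)`.
-/

/-- Optimal finite-difference coefficients for the first derivative on the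
stencil `{-l, …, r}`:  `a_k = -((-1)^k / k) · (l!·r!)/((l+k)!·(r-k)!)` for `k ≠ 0`
and `a_0 = -Σ_{-l ≤ ν ≤ r, ν ≠ 0} 1/ν`. -/
noncomputable def aCoef (l r : ℕ) (k : ℤ) : ℝ :=
  if k = 0 then
    -∑ ν ∈ (Finset.Icc (-(l : ℤ)) (r : ℤ)).erase 0, (1 : ℝ) / (ν : ℝ)
  else
    -((-1 : ℝ) ^ k / (k : ℝ)) *
      ((Nat.factorial l * Nat.factorial r : ℕ) : ℝ) /
      ((Nat.factorial ((l : ℤ) + k).toNat * Nat.factorial ((r : ℤ) - k).toNat : ℕ) : ℝ)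

open Finset Polynomial
open scoped Nat

namespace Lagrange

variable {F ι : Type*} [Field F] [DecidableEq ι] {s : Finset ι} {v : ι → F} {i j : ι}

theorem basis_eq_C_nodalWeight_mul_nodal_erase :
    Lagrange.basis s v i = C (nodalWeight s v i) * nodal (s.erase i) v := by
  simp_rw [Lagrange.basis, basisDivisor, nodalWeight, prod_mul_distrib, map_prod, nodal]

theorem eval_derivative_basis_of_ne (hij : i ≠ j) (hj : j ∈ s) :
    (derivative (Lagrange.basis s v i)).eval (v j) =
      nodalWeight s v i * ∏ k ∈ (s.erase i).erase j, (v j - v k) := by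
  rw [basis_eq_C_nodalWeight_mul_nodal_erase, derivative_C_mul, eval_mul, eval_C,
    eval_nodal_derivative_eval_node_eq (mem_erase.mpr ⟨hij.symm, hj⟩), eval_nodal]

theorem eval_derivative_basis_self (hvs : Set.InjOn v s) (hi : i ∈ s) :
    (derivative (Lagrange.basis s v i)).eval (v i) = ∑ j ∈ s.erase i, (v i - v j)⁻¹ := by
  rw [basis_eq_C_nodalWeight_mul_nodal_erase, derivative_C_mul, eval_mul, eval_C,
    derivative_nodal, eval_finsetSum, mul_sum]
  refine sum_congr rfl fun j hj => ?_
  have hnodes : ∏ k ∈ (s.erase i).erase j, (v i - v k) ≠ 0 :=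
    prod_ne_zero_iff.mpr fun k hk => sub_ne_zero.mpr fun hvk =>
      (mem_erase.mp (mem_of_mem_erase hk)).1
        (hvs hi (mem_of_mem_erase (mem_of_mem_erase hk)) hvk).symm
  rw [nodalWeight, ← mul_prod_erase _ _ hj, eval_nodal, prod_inv_distrib, mul_assoc,
    inv_mul_cancel₀ hnodes, mul_one]

theorem eval_derivative_eq_sum {P : F[X]} (hvs : Set.InjOn v s) (hP : P.degree < #s) (x : F) :
    (derivative P).eval x =
      ∑ i ∈ s, P.eval (v i) * (derivative (Lagrange.basis s v i)).eval x := by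
  nth_rewrite 1 [eq_interpolate hvs hP]
  simp only [interpolate_apply, derivative_sum, derivative_C_mul, eval_finsetSum, eval_mul, eval_C]

end Lagrange

theorem Int.prod_Ico_sub_eq_factorial (k : ℤ) (a : ℕ) : ∏ j ∈ Ico (k - a) k, (k - j) = a ! := by
  induction a with
  | zero => simp
  | succ a ih =>
    have hIco : Ico (k - ↑(a + 1)) k = insert (k - ↑(a + 1)) (Ico (k - a) k) := by
      ext j; simp only [mem_Ico, mem_insert]; omega
    rw [hIco, prod_insert (by simp only [mem_Ico]; omega), ih, Nat.factorial_succ]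
    push_cast; ring

theorem Int.prod_Ioc_sub_eq_neg_one_pow_mul_factorial (k : ℤ) (b : ℕ) :
    ∏ j ∈ Ioc k (k + b), (k - j) = (-1) ^ b * b ! := by
  induction b with
  | zero => simp
  | succ b ih =>
    have hIoc : Ioc k (k + ↑(b + 1)) = insert (k + ↑(b + 1)) (Ioc k (k + b)) := by
      ext j; simp only [mem_Ioc, mem_insert]; omega
    rw [hIoc, prod_insert (by simp only [mem_Ioc]; omega), ih, Nat.factorial_succ]
    push_cast; ring

theorem Int.prod_erase_Icc_sub (k : ℤ) (a b : ℕ) :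
    ∏ j ∈ (Icc (k - a) (k + b)).erase k, (k - j) = (-1) ^ b * a ! * b ! := by
  have hsplit : (Icc (k - a) (k + b)).erase k = Ico (k - a) k ∪ Ioc k (k + b) := by
    ext j; simp only [mem_erase, mem_Icc, mem_union, mem_Ico, mem_Ioc]; omega
  have hdisj : Disjoint (Ico (k - a) k) (Ioc k (k + b)) := by
    simp only [disjoint_left, mem_Ico, mem_Ioc]; omega
  rw [hsplit, prod_union hdisj, Int.prod_Ico_sub_eq_factorial,
    Int.prod_Ioc_sub_eq_neg_one_pow_mul_factorial]
  ring

theorem prod_erase_Icc_sub_of_mem {l r : ℕ} {k : ℤ} (hk : k ∈ Icc (-(l : ℤ)) r) :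
    ∏ j ∈ (Icc (-(l : ℤ)) r).erase k, ((k : ℝ) - j) =
      (-1) ^ ((r : ℤ) - k).toNat * ((l : ℤ) + k).toNat ! * ((r : ℤ) - k).toNat ! := by
  rw [mem_Icc] at hk
  have hl : k - ((l + k).toNat : ℤ) = -l := by omega
  have hr : k + ((r - k).toNat : ℤ) = r := by omega
  have h := Int.prod_erase_Icc_sub k ((l : ℤ) + k).toNat ((r : ℤ) - k).toNat
  rw [hl, hr] at h
  exact_mod_cast h

theorem eval_derivative_basis_Icc_eq_aCoef {l r : ℕ} {k : ℤ} (hk : k ∈ Icc (-(l : ℤ)) r) :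
    (derivative (Lagrange.basis (Icc (-(l : ℤ)) r) (Int.cast : ℤ → ℝ) k)).eval 0 =
      aCoef l r k := by
  have h0 : (0 : ℤ) ∈ Icc (-(l : ℤ)) r := by simp
  rcases eq_or_ne k 0 with rfl | hk0
  · rw [← Int.cast_zero, Lagrange.eval_derivative_basis_self Int.cast_injective.injOn h0, aCoef,
      if_pos rfl, ← sum_neg_distrib]
    simp [one_div, ← inv_neg]
  · have hN := prod_erase_Icc_sub_of_mem h0
    rw [← mul_prod_erase _ _ (mem_erase.mpr ⟨hk0, hk⟩), erase_right_comm] at hN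
    have hsign : (-1 : ℝ) ^ ((r : ℤ) - k).toNat = (-1) ^ r / (-1) ^ k := by
      rw [← zpow_natCast, Int.toNat_of_nonneg (by rw [mem_Icc] at hk; omega),
        zpow_sub₀ (by norm_num), zpow_natCast]
    rw [← Int.cast_zero, Lagrange.eval_derivative_basis_of_ne hk0 h0, Lagrange.nodalWeight,
      prod_inv_distrib, prod_erase_Icc_sub_of_mem hk, aCoef, if_neg hk0, hsign]
    simp only [Int.cast_zero, zero_sub, sub_zero, add_zero, Int.toNat_natCast] at hN ⊢
    have hk' : (k : ℝ) ≠ 0 := Int.cast_ne_zero.mpr hk0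
    rw [mul_comm, ← eq_div_iff (neg_ne_zero.mpr hk')] at hN
    rw [hN]
    push_cast
    field_simp

theorem firstDerivative_optimal_accuracy_general (l r : ℕ)
    (P : Polynomial ℝ) (hP : P.natDegree ≤ l + r) :
    ∑ k ∈ Finset.Icc (-(l : ℤ)) (r : ℤ), aCoef l r k * P.eval (k : ℝ) =
      P.derivative.eval 0 := by
  have hcard : #(Icc (-(l : ℤ)) r) = l + r + 1 := by
    rw [Int.card_Icc]; omega
  have hdeg : P.degree < #(Icc (-(l : ℤ)) r) := by
    rw [hcard]
    exact degree_le_natDegree.trans_lt (by exact_mod_cast Nat.lt_succ_of_le hP)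
  rw [Lagrange.eval_derivative_eq_sum Int.cast_injective.injOn hdeg]
  exact sum_congr rfl fun k hk => by rw [eval_derivative_basis_Icc_eq_aCoef hk, mul_comm]

/-- The coefficients `a_k` reproduce the first derivative exactly on all
polynomials of degree at most `l + r`. -/
theorem firstDerivative_optimal_accuracy (l r : ℕ) (hlr : 0 < l + r)
    (P : Polynomial ℝ) (hP : P.natDegree ≤ l + r) :
    ∑ k ∈ Finset.Icc (-(l : ℤ)) (r : ℤ), aCoef l r k * P.eval (k : ℝ) =
      P.derivative.eval 0 :=
  firstDerivative_optimal_accuracy_general l r P hP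
end

section
/- Let q ≥ 1 be an integer, and let the coefficients b_k for -q ≤ k ≤ q be defined by b_k = -(2·(-1)^k / k²) · (q!·q!)/((q+k)!·(q-k)!) for k ≠ 0 and b_0 = -Σ_{k=1}^{q} 2/k². Then for every polynomial P with real coefficients of degree at most 2q + 1, one has Σ_{k=-q}^{q} b_k · P(k) = P''(0). In other words, these symmetric coefficients give the finite-difference approximation of the second derivative with optimal order of accuracy 2q on the centered stencil {-q, …, q}. -/
open Finset Polynomial fwdDiff

lemma fwdDiff_iter_eval_zero (n : ℕ) (p : Polynomial ℝ) (hp : p.natDegree < n) (y : ℕ) :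
    (fwdDiff 1)^[n] (fun x : ℕ ↦ p.eval (x : ℝ)) y = 0 := by
  induction n generalizing p y with
  | zero => omega
  | succ n ih =>
    set g : Polynomial ℝ := p.comp (X + C 1) - p with hg
    have hΔ : fwdDiff 1 (fun x : ℕ ↦ p.eval (x : ℝ)) = fun x : ℕ ↦ g.eval (x : ℝ) := by
      ext x
      simp only [fwdDiff, hg, Polynomial.eval_sub, Polynomial.eval_comp, Polynomial.eval_add,
        Polynomial.eval_X, Polynomial.eval_C]
      push_cast
      ring
    rw [Function.iterate_succ_apply, hΔ]
    by_cases hg0 : g = 0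
    · rw [hg0]
      simp only [Polynomial.eval_zero]
      rw [show (fun _ : ℕ ↦ (0:ℝ)) = fun x : ℕ ↦ (0:Polynomial ℝ).eval (x:ℝ) by simp]
      rw [fwdDiff_iter_eq_sum_shift]
      simp
    · have hp0 : p ≠ 0 := by
        intro h; apply hg0; simp [hg, h]
      have hX1 : (X + C 1 : Polynomial ℝ).natDegree = 1 := Polynomial.natDegree_X_add_C 1
      have h1 : (p.comp (X + C 1)).natDegree = p.natDegree := by
        rw [Polynomial.natDegree_comp, hX1, mul_one]
      have hlc : (p.comp (X + C 1)).leadingCoeff = p.leadingCoeff := by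
        rw [Polynomial.leadingCoeff_comp (by rw [hX1]; norm_num)]
        rw [(Polynomial.monic_X_add_C (1:ℝ)).leadingCoeff, one_pow, mul_one]
      have hc0 : p.comp (X + C 1) ≠ 0 := by
        intro h
        rw [h] at hlc
        exact hp0 (Polynomial.leadingCoeff_eq_zero.mp hlc.symm)
      have hdeg : (p.comp (X + C 1)).degree = p.degree := by
        rw [Polynomial.degree_eq_natDegree hc0, Polynomial.degree_eq_natDegree hp0, h1]
      have hlt : g.degree < p.degree := by
        have := Polynomial.degree_sub_lt hdeg hc0 hlc
        rwa [hdeg] at this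
      have : g.natDegree < n := lt_of_lt_of_le (Polynomial.natDegree_lt_natDegree hg0
        (by rwa [Polynomial.degree_eq_natDegree hp0] at hlt ⊢ <;> skip)) (Nat.lt_succ_iff.mp hp)
      exact ih g this y

lemma alt_sum_poly (N : ℕ) (p : Polynomial ℝ) (hp : p.natDegree < N) :
    ∑ i ∈ Finset.range (N + 1), (-1 : ℝ) ^ i * (N.choose i) * p.eval (i : ℝ) = 0 := by
  have h0 := fwdDiff_iter_eq_sum_shift (1 : ℕ) (fun x : ℕ ↦ p.eval (x : ℝ)) N 0
  rw [fwdDiff_iter_eval_zero N p hp 0] at h0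
  have key : ∀ i ∈ Finset.range (N + 1),
      ((-1 : ℤ) ^ (N - i) * (N.choose i : ℤ)) • p.eval ((0 + i • 1 : ℕ) : ℝ)
        = (-1 : ℝ) ^ N * ((-1 : ℝ) ^ i * (N.choose i) * p.eval (i : ℝ)) := by
    intro i hi
    have hiN : i ≤ N := by simpa [Nat.lt_succ_iff] using hi
    have hs : (-1 : ℝ) ^ (N - i) * (-1 : ℝ) ^ i = (-1 : ℝ) ^ N := pow_sub_mul_pow _ hiN
    have hii : (-1 : ℝ) ^ i * (-1 : ℝ) ^ i = 1 := by
      rw [← pow_add]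
      exact Even.neg_one_pow ⟨i, rfl⟩
    rw [zsmul_eq_mul]
    push_cast
    rw [smul_eq_mul, mul_one]
    rw [zero_add]
    linear_combination ((N.choose i : ℝ) * p.eval (i:ℝ) * (-1:ℝ)^i) * hs
      - ((-1:ℝ)^(N-i) * (N.choose i : ℝ) * p.eval (i:ℝ)) * hii
  rw [Finset.sum_congr rfl key, ← Finset.mul_sum] at h0
  rcases mul_eq_zero.mp h0.symm with h | h
  · exact absurd h (pow_ne_zero N (by norm_num))
  · exact h


noncomputable def cc (q j : ℕ) : ℝ :=
  (q.factorial * q.factorial : ℝ) / ((q + j).factorial * (q - j).factorial)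

lemma cc_pos (q j : ℕ) : 0 < cc q j := by
  unfold cc
  positivity

lemma choose_eq_cc (q j : ℕ) (hj : j ≤ q) :
    ((2 * q).choose (q + j) : ℝ) = ((2 * q).choose q : ℝ) * cc q j := by
  have h1 : (2*q).choose (q+j) * (q+j).factorial * (2*q - (q+j)).factorial = (2*q).factorial :=
    Nat.choose_mul_factorial_mul_factorial (by omega)
  have h2 : (2*q).choose q * q.factorial * (2*q - q).factorial = (2*q).factorial :=
    Nat.choose_mul_factorial_mul_factorial (by omega)
  rw [show 2*q - (q+j) = q - j by omega] at h1
  rw [show 2*q - q = q by omega] at h2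
  have e1 : ((2*q).choose (q+j) : ℝ) * ((q+j).factorial * (q-j).factorial)
      = ((2*q).choose q : ℝ) * (q.factorial * q.factorial) := by
    have := congrArg (Nat.cast (R := ℝ)) (h1.trans h2.symm)
    push_cast at this
    linarith [this]
  unfold cc
  rw [mul_div_assoc'] at *
  rw [eq_div_iff (by positivity)]
  linarith [e1]

lemma cc_rec (q j : ℕ) (hj : j ≤ q) :
    cc (q+1) j = cc q j + cc (q+1) j * (j:ℝ)^2 / ((q:ℝ)+1)^2 := by
  have hq1 : q + 1 + j = (q + j) + 1 := by omega
  have hq2 : q + 1 - j = (q - j) + 1 := by omega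
  unfold cc
  rw [hq1, hq2, Nat.factorial_succ, Nat.factorial_succ, Nat.factorial_succ]
  have hfj : ((q+j).factorial : ℝ) ≠ 0 := Nat.cast_ne_zero.2 (Nat.factorial_ne_zero _)
  have hfj' : ((q-j).factorial : ℝ) ≠ 0 := Nat.cast_ne_zero.2 (Nat.factorial_ne_zero _)
  have hfq : (q.factorial : ℝ) ≠ 0 := Nat.cast_ne_zero.2 (Nat.factorial_ne_zero _)
  have hj1 : ((q:ℝ) + j + 1) ≠ 0 := by positivity
  have hj2 : ((q:ℝ) - j + 1) ≠ 0 := by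
    have : (j:ℝ) ≤ q := by exact_mod_cast hj
    nlinarith
  have hcast : (((q - j : ℕ)) : ℝ) = (q:ℝ) - j := by
    rw [Nat.cast_sub hj]
  push_cast
  rw [hcast]
  field_simp
  ring


-- splitting an Icc(-q,q) sum symmetrically
lemma sum_Icc_int_symm (q : ℕ) (g : ℤ → ℝ) :
    ∑ k ∈ Finset.Icc (-(q:ℤ)) (q:ℤ), g k
      = g 0 + ∑ j ∈ Finset.Icc 1 q, (g (j:ℤ) + g (-(j:ℤ))) := by
  induction q with
  | zero => simp
  | succ q ih =>
    have h1 : Finset.Icc (-((q:ℤ)+1)) ((q:ℤ)+1)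
        = insert (-((q:ℤ)+1)) (insert ((q:ℤ)+1) (Finset.Icc (-(q:ℤ)) (q:ℤ))) := by
      ext k
      simp only [Finset.mem_Icc, Finset.mem_insert]
      omega
    have hc : ((q+1:ℕ):ℤ) = (q:ℤ)+1 := by push_cast; ring
    rw [hc, h1, Finset.sum_insert (by simp only [Finset.mem_insert, Finset.mem_Icc]; omega),
      Finset.sum_insert (by simp only [Finset.mem_Icc]; omega), ih,
      Finset.sum_Icc_succ_top (by omega)]
    push_cast
    ring

lemma sum_range_split (q : ℕ) (F : ℕ → ℝ) :
    ∑ i ∈ Finset.range (2*q+1), F i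
      = F q + ∑ j ∈ Finset.Icc 1 q, (F (q+j) + F (q-j)) := by
  rw [Finset.range_eq_Ico, ← Finset.sum_Ico_consecutive _ (Nat.zero_le q) (by omega),
    Finset.sum_eq_sum_Ico_succ_bot (show q < 2*q+1 by omega)]
  have e1 : ∑ i ∈ Finset.Ico 0 q, F i = ∑ j ∈ Finset.Icc 1 q, F (q - j) := by
    apply Finset.sum_nbij' (fun i ↦ q - i) (fun j ↦ q - j)
    · intro a ha; simp only [Finset.mem_Ico] at ha; simp only [Finset.mem_Icc]; omega
    · intro a ha; simp only [Finset.mem_Icc] at ha; simp only [Finset.mem_Ico]; omega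
    · intro a ha; simp only [Finset.mem_Ico] at ha; omega
    · intro a ha; simp only [Finset.mem_Icc] at ha; omega
    · intro a ha; simp only [Finset.mem_Ico] at ha; congr 1; omega
  have e2 : ∑ i ∈ Finset.Ico (q+1) (2*q+1), F i = ∑ j ∈ Finset.Icc 1 q, F (q + j) := by
    apply Finset.sum_nbij' (fun i ↦ i - q) (fun j ↦ q + j)
    · intro a ha; simp only [Finset.mem_Ico] at ha; simp only [Finset.mem_Icc]; omega
    · intro a ha; simp only [Finset.mem_Icc] at ha; simp only [Finset.mem_Ico]; omega
    · intro a ha; simp only [Finset.mem_Ico] at ha; omega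
    · intro a ha; simp only [Finset.mem_Icc] at ha; omega
    · intro a ha; simp only [Finset.mem_Ico] at ha
      congr 1
      omega
  rw [e1, e2, Finset.sum_add_distrib]
  ring


lemma key (q m : ℕ) (hm : m < q) :
    ∑ j ∈ Finset.Icc 1 q, (-1:ℝ)^j * cc q j * (j:ℝ)^(2*m)
      = -(1/2) * (0:ℝ)^(2*m) := by
  have hdeg : ((X - C (q:ℝ))^(2*m)).natDegree < 2*q := by
    rw [Polynomial.natDegree_pow, Polynomial.natDegree_X_sub_C]
    omega
  have h := alt_sum_poly (2*q) ((X - C (q:ℝ))^(2*m)) hdeg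
  simp only [Polynomial.eval_pow, Polynomial.eval_sub, Polynomial.eval_X,
    Polynomial.eval_C] at h
  rw [sum_range_split q (fun i => (-1:ℝ)^i * (((2*q).choose i : ℕ):ℝ) * ((i:ℝ) - q)^(2*m))] at h
  set A : ℝ := (-1:ℝ)^q * (((2*q).choose q : ℕ):ℝ) with hA
  have hAne : A ≠ 0 := by
    apply mul_ne_zero (pow_ne_zero q (by norm_num))
    exact Nat.cast_ne_zero.2 (Nat.choose_pos (by omega)).ne'
  have hterm : ∀ j ∈ Finset.Icc 1 q,
      ((-1:ℝ)^(q+j) * (((2*q).choose (q+j) : ℕ):ℝ) * (((q+j:ℕ):ℝ) - q)^(2*m)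
        + (-1:ℝ)^(q-j) * (((2*q).choose (q-j) : ℕ):ℝ) * (((q-j:ℕ):ℝ) - q)^(2*m))
      = 2 * A * ((-1:ℝ)^j * cc q j * (j:ℝ)^(2*m)) := by
    intro j hj
    rw [Finset.mem_Icc] at hj
    have hjq : j ≤ q := hj.2
    have hc1 : (((q+j:ℕ)):ℝ) = (q:ℝ) + j := by push_cast; ring
    have hc2 : (((q-j:ℕ)):ℝ) = (q:ℝ) - j := by rw [Nat.cast_sub hjq]
    have hch : (2*q).choose (q-j) = (2*q).choose (q+j) := by
      rw [show q - j = 2*q - (q+j) by omega, Nat.choose_symm (by omega)]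
    have hs1 : (-1:ℝ)^(q+j) = (-1:ℝ)^q * (-1:ℝ)^j := pow_add _ _ _
    have hii : (-1:ℝ)^j * (-1:ℝ)^j = 1 := by
      rw [← pow_add]; exact Even.neg_one_pow ⟨j, rfl⟩
    have hs2 : (-1:ℝ)^(q-j) = (-1:ℝ)^q * (-1:ℝ)^j := by
      have h2 : (-1:ℝ)^(q-j) * (-1:ℝ)^j = (-1:ℝ)^q := by
        rw [← pow_add]
        congr 1
        omega
      calc (-1:ℝ)^(q-j) = (-1:ℝ)^(q-j) * ((-1:ℝ)^j * (-1:ℝ)^j) := by rw [hii, mul_one]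
        _ = ((-1:ℝ)^(q-j) * (-1:ℝ)^j) * (-1:ℝ)^j := by ring
        _ = (-1:ℝ)^q * (-1:ℝ)^j := by rw [h2]
    have hcc := choose_eq_cc q j hjq
    have hev : ((q:ℝ) - j - q)^(2*m) = (j:ℝ)^(2*m) := by
      rw [show (q:ℝ) - j - q = -(j:ℝ) by ring, Even.neg_pow (even_two_mul m)]
    have hev2 : ((q:ℝ) + j - q)^(2*m) = (j:ℝ)^(2*m) := by
      rw [show (q:ℝ) + j - q = (j:ℝ) by ring]
    rw [hc1, hc2, hch, hs1, hs2, hcc, hev, hev2, hA]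
    ring
  rw [Finset.sum_congr rfl hterm, ← Finset.mul_sum] at h
  have hq0 : ((q:ℝ) - q)^(2*m) = (0:ℝ)^(2*m) := by rw [sub_self]
  rw [hq0] at h
  apply mul_left_cancel₀ (mul_ne_zero (two_ne_zero) hAne)
  linear_combination h

lemma Tlem (q : ℕ) :
    ∑ j ∈ Finset.Icc 1 q, (-1:ℝ)^j * cc q j / (j:ℝ)^2
      = -(1/2) * ∑ j ∈ Finset.Icc 1 q, 1 / (j:ℝ)^2 := by
  induction q with
  | zero => simp
  | succ q ih =>
    have hkey := key (q+1) 0 (by omega)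
    simp only [mul_zero, pow_zero, mul_one] at hkey
    -- hkey : ∑ j ∈ Icc 1 (q+1), (-1)^j * cc (q+1) j = -(1/2)
    rw [Finset.sum_Icc_succ_top (by omega : 1 ≤ q + 1),
        Finset.sum_Icc_succ_top (by omega : 1 ≤ q + 1)]
    rw [Finset.sum_Icc_succ_top (by omega : 1 ≤ q + 1)] at hkey
    have hsum : ∑ j ∈ Finset.Icc 1 q, (-1:ℝ)^j * cc (q+1) j / (j:ℝ)^2
        = (∑ j ∈ Finset.Icc 1 q, (-1:ℝ)^j * cc q j / (j:ℝ)^2)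
          + (1/((q:ℝ)+1)^2) * ∑ j ∈ Finset.Icc 1 q, (-1:ℝ)^j * cc (q+1) j := by
      rw [Finset.mul_sum, ← Finset.sum_add_distrib]
      apply Finset.sum_congr rfl
      intro j hj
      rw [Finset.mem_Icc] at hj
      have hj0 : (j:ℝ) ≠ 0 := Nat.cast_ne_zero.2 (by omega)
      have hq1 : ((q:ℝ)+1) ≠ 0 := by positivity
      conv_lhs => rw [cc_rec q j hj.2]
      field_simp
    push_cast
    push_cast at hsum ih hkey
    rw [hsum, ih]
    linear_combination (1/((q:ℝ)+1)^2) * hkey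

/-- Optimal centered finite-difference coefficients for the second derivative on
the stencil `{-q, …, q}`:  `b_k = -(2·(-1)^k / k²) · (q!·q!)/((q+k)!·(q-k)!)` for
`k ≠ 0` and `b_0 = -Σ_{k=1}^{q} 2/k²`. -/
noncomputable def bCoef (q : ℕ) (k : ℤ) : ℝ :=
  if k = 0 then
    -∑ j ∈ Finset.Icc 1 q, 2 / (j : ℝ) ^ 2
  else
    -(2 * (-1 : ℝ) ^ k / (k : ℝ) ^ 2) *
      ((Nat.factorial q * Nat.factorial q : ℕ) : ℝ) /
      ((Nat.factorial ((q : ℤ) + k).toNat * Nat.factorial ((q : ℤ) - k).toNat : ℕ) : ℝ)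

lemma bCoef_pos (q j : ℕ) (h1 : 1 ≤ j) (h2 : j ≤ q) :
    bCoef q (j:ℤ) = -2 * (-1:ℝ)^j / (j:ℝ)^2 * cc q j := by
  rw [bCoef, if_neg (Int.natCast_ne_zero.mpr (by omega))]
  rw [show ((q:ℤ) + (j:ℤ)) = ((q+j:ℕ):ℤ) by push_cast; ring,
    show ((q:ℤ) - (j:ℤ)) = ((q-j:ℕ):ℤ) by omega, Int.toNat_natCast, Int.toNat_natCast,
    zpow_natCast]
  unfold cc
  push_cast
  ring

lemma neg_one_zpow_natCast (j : ℕ) : (-1:ℝ) ^ (-(j:ℤ)) = (-1:ℝ)^j := by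
  rw [zpow_neg, zpow_natCast]
  rcases Nat.even_or_odd j with h | h
  · rw [h.neg_one_pow]; norm_num
  · rw [h.neg_one_pow]; norm_num

lemma bCoef_neg (q j : ℕ) (h1 : 1 ≤ j) (h2 : j ≤ q) :
    bCoef q (-(j:ℤ)) = -2 * (-1:ℝ)^j / (j:ℝ)^2 * cc q j := by
  rw [bCoef, if_neg (neg_ne_zero.mpr (Int.natCast_ne_zero.mpr (by omega)))]
  rw [show ((q:ℤ) + -(j:ℤ)) = ((q-j:ℕ):ℤ) by omega,
    show ((q:ℤ) - -(j:ℤ)) = ((q+j:ℕ):ℤ) by push_cast; ring, Int.toNat_natCast, Int.toNat_natCast,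
    neg_one_zpow_natCast]
  unfold cc
  push_cast
  ring

lemma bCoef_zero (q : ℕ) : bCoef q 0 = -∑ j ∈ Finset.Icc 1 q, 2 / (j : ℝ) ^ 2 := by
  rw [bCoef, if_pos rfl]

lemma moment (q : ℕ) (hq : 1 ≤ q) (n : ℕ) (hn : n ≤ 2*q+1) :
    ∑ k ∈ Finset.Icc (-(q:ℤ)) (q:ℤ), bCoef q k * ((k:ℤ):ℝ)^n
      = if n = 2 then 2 else 0 := by
  rw [sum_Icc_int_symm q (fun k => bCoef q k * ((k:ℤ):ℝ)^n)]
  have hterm : ∀ j ∈ Finset.Icc 1 q,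
      (bCoef q (j:ℤ) * (((j:ℤ)):ℝ)^n + bCoef q (-(j:ℤ)) * (((-(j:ℤ)):ℤ):ℝ)^n)
      = (-2*(-1:ℝ)^j/(j:ℝ)^2 * cc q j) * ((j:ℝ)^n + (-(j:ℝ))^n) := by
    intro j hj
    rw [Finset.mem_Icc] at hj
    rw [bCoef_pos q j hj.1 hj.2, bCoef_neg q j hj.1 hj.2]
    push_cast
    ring
  rw [Finset.sum_congr rfl hterm]
  rcases Nat.even_or_odd n with he | ho
  · obtain ⟨m, hm⟩ := he
    have hn2 : n = 2*m := by omega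
    clear hm
    subst hn2
    rcases Nat.eq_zero_or_pos m with rfl | hm1
    · -- n = 0
      rw [if_neg (by norm_num : ¬2*0 = 2)]
      simp only [Nat.mul_zero, pow_zero, mul_one, Int.cast_zero]
      have h2 : ∀ j ∈ Finset.Icc 1 q,
          (-2*(-1:ℝ)^j/(j:ℝ)^2 * cc q j) * (1+1) = -4 * ((-1:ℝ)^j * cc q j / (j:ℝ)^2) := by
        intro j hj; ring
      rw [bCoef_zero, Finset.sum_congr rfl h2, ← Finset.mul_sum, Tlem q]
      have hS : ∑ j ∈ Finset.Icc 1 q, 2/(j:ℝ)^2 = 2 * ∑ j ∈ Finset.Icc 1 q, 1/(j:ℝ)^2 := by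
        rw [Finset.mul_sum]
        exact Finset.sum_congr rfl (fun j _ => by ring)
      rw [hS]
      ring
    · -- n = 2m, m ≥ 1
      have h0 : bCoef q 0 * ((0:ℤ):ℝ)^(2*m) = 0 := by
        rw [Int.cast_zero, zero_pow (by omega : 2*m ≠ 0), mul_zero]
      have h2 : ∀ j ∈ Finset.Icc 1 q,
          (-2*(-1:ℝ)^j/(j:ℝ)^2 * cc q j) * ((j:ℝ)^(2*m) + (-(j:ℝ))^(2*m))
            = -4 * ((-1:ℝ)^j * cc q j * (j:ℝ)^(2*(m-1))) := by
        intro j hj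
        rw [Finset.mem_Icc] at hj
        have hj0 : (j:ℝ) ≠ 0 := Nat.cast_ne_zero.2 (by omega)
        rw [Even.neg_pow (even_two_mul m), show 2*m = 2 + 2*(m-1) by omega, pow_add]
        field_simp
        ring
      rw [Finset.sum_congr rfl h2, ← Finset.mul_sum, key q (m-1) (by omega), h0, zero_add]
      by_cases hm2 : m = 1
      · subst hm2; norm_num
      · rw [zero_pow (by omega : 2*(m-1) ≠ 0), if_neg (by omega)]
        ring
  · -- odd n
    have h0 : bCoef q 0 * ((0:ℤ):ℝ)^n = 0 := by
      rw [Int.cast_zero, zero_pow (by rintro rfl; exact absurd ho (by decide)), mul_zero]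
    have h2 : ∀ j ∈ Finset.Icc 1 q,
        (-2*(-1:ℝ)^j/(j:ℝ)^2 * cc q j) * ((j:ℝ)^n + (-(j:ℝ))^n) = 0 := by
      intro j hj
      rw [Odd.neg_pow ho]
      ring
    rw [Finset.sum_congr rfl h2, Finset.sum_const_zero, h0,
      if_neg (by rintro rfl; exact absurd ho (by decide)), add_zero]

/-- The coefficients `b_k` reproduce the second derivative exactly on all
polynomials of degree at most `2q + 1`. -/
theorem secondDerivative_optimal_accuracy (q : ℕ) (hq : 1 ≤ q)
    (P : Polynomial ℝ) (hP : P.natDegree ≤ 2 * q + 1) :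
    ∑ k ∈ Finset.Icc (-(q : ℤ)) (q : ℤ), bCoef q k * P.eval (k : ℝ) =
      P.derivative.derivative.eval 0 := by
  have hdeg : P.natDegree < 2*q+2 := by omega
  have hev : ∀ k : ℤ, P.eval ((k:ℤ):ℝ) = ∑ i ∈ Finset.range (2*q+2), P.coeff i * ((k:ℤ):ℝ)^i :=
    fun k => Polynomial.eval_eq_sum_range' hdeg _
  have step1 : ∑ k ∈ Finset.Icc (-(q:ℤ)) (q:ℤ), bCoef q k * P.eval ((k:ℤ):ℝ)
      = ∑ i ∈ Finset.range (2*q+2), P.coeff i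
          * (∑ k ∈ Finset.Icc (-(q:ℤ)) (q:ℤ), bCoef q k * ((k:ℤ):ℝ)^i) := by
    have e1 : ∀ k ∈ Finset.Icc (-(q:ℤ)) (q:ℤ), bCoef q k * P.eval ((k:ℤ):ℝ)
        = ∑ i ∈ Finset.range (2*q+2), P.coeff i * (bCoef q k * ((k:ℤ):ℝ)^i) := by
      intro k _
      rw [hev k, Finset.mul_sum]
      exact Finset.sum_congr rfl (fun i _ => by ring)
    rw [Finset.sum_congr rfl e1, Finset.sum_comm]
    exact Finset.sum_congr rfl (fun i _ => by rw [Finset.mul_sum])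
  rw [step1]
  have step2 : ∀ i ∈ Finset.range (2*q+2),
      P.coeff i * (∑ k ∈ Finset.Icc (-(q:ℤ)) (q:ℤ), bCoef q k * ((k:ℤ):ℝ)^i)
        = if i = 2 then P.coeff 2 * 2 else 0 := by
    intro i hi
    rw [Finset.mem_range] at hi
    rw [moment q hq i (by omega)]
    by_cases h2 : i = 2
    · subst h2; rw [if_pos rfl, if_pos rfl]
    · rw [if_neg h2, if_neg h2, mul_zero]
  rw [Finset.sum_congr rfl step2, Finset.sum_ite_eq' (Finset.range (2*q+2)) 2
    (fun _ => P.coeff 2 * 2), if_pos (by rw [Finset.mem_range]; omega)]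
  rw [← Polynomial.coeff_zero_eq_eval_zero]
  simp [Polynomial.coeff_derivative]
  norm_num
end

section
/- Let l, r ≥ 0 be integers with l + r > 0 and a_k, λ₀ as in the context. If l = r + 1, then for every real θ, Re λ₀(e^{iθ}) = -(2^{2(r+1)} · (r+1)! · r! / (2r+2)!) · (sin(θ/2))^{2(r+1)}. If l = r + 2, then for every real θ, Re λ₀(e^{iθ}) = -(2^{2(r+2)} · (2r+3) · (r+2)! · r! / (2r+4)!) · (sin(θ/2))^{2(r+2)}. Consequently, if r + 1 ≤ l ≤ r + 2, then Re λ₀(e^{iθ}) < 0 for all 0 < θ < 2π, and λ₀(1) = 0. -/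
/-- The symbol `λ₀(s) = -Σ_{k=-l}^{r} a_k s^k` of the advection discretization. -/
noncomputable def lam0 (l r : ℕ) (s : ℂ) : ℂ :=
  -∑ k ∈ Finset.Icc (-(l : ℤ)) (r : ℤ), (aCoef l r k : ℂ) * s ^ k

open Finset

section Harmonic

variable {K : Type*} [Field K] [CharZero K]

theorem sum_range_neg_one_pow_mul_choose_div_succ (n : ℕ) :
    ∑ m ∈ range (n + 1), (-1 : K) ^ m * n.choose m / (m + 1) = 1 / (n + 1) := by
  have hrow : ∑ m ∈ range (n + 1), (-1 : ℤ) ^ m * (n + 1).choose (m + 1) = 1 := by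
    have h := Int.alternating_sum_range_choose_of_ne n.succ_ne_zero
    simp only [sum_range_succ' _ (n + 1), pow_succ, mul_neg_one, neg_mul, sum_neg_distrib,
      pow_zero, Nat.choose_zero_right, Nat.succ_eq_add_one, Nat.cast_one, one_mul] at h
    linarith
  have hterm (m : ℕ) :
      (-1 : K) ^ m * n.choose m / (m + 1) = (-1 : K) ^ m * (n + 1).choose (m + 1) / (n + 1) := by
    have h : ((n + 1 : ℕ) : K) * n.choose m = (n + 1).choose (m + 1) * (m + 1 : ℕ) := by
      exact_mod_cast Nat.add_one_mul_choose_eq n m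
    push_cast at h
    rw [div_eq_div_iff (Nat.cast_add_one_ne_zero m) (Nat.cast_add_one_ne_zero n)]
    linear_combination (-1 : K) ^ m * h
  simp_rw [hterm, ← sum_div]
  congr 1
  exact_mod_cast hrow

theorem sum_range_neg_one_pow_mul_choose_succ_div_succ (n : ℕ) :
    ∑ m ∈ range n, (-1 : K) ^ m * n.choose (m + 1) / (m + 1) = harmonic n := by
  induction n with
  | zero => simp
  | succ n ih =>
    have hpascal (m : ℕ) : ((-1 : K) ^ m * (n + 1).choose (m + 1) / (m + 1))
        = (-1 : K) ^ m * n.choose m / (m + 1) + (-1 : K) ^ m * n.choose (m + 1) / (m + 1) := by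
      rw [Nat.choose_succ_succ']; push_cast; ring
    rw [sum_congr rfl fun m _ => hpascal m, sum_add_distrib,
      sum_range_neg_one_pow_mul_choose_div_succ, sum_range_succ _ n, ih,
      Nat.choose_succ_self, harmonic_succ]
    push_cast
    ring

theorem sum_range_neg_one_pow_mul_choose_add_div (l r : ℕ) :
    ∑ m ∈ range r, (-1 : K) ^ m * (l + r).choose (l + m + 1) / (m + 1)
      = (l + r).choose l * ((harmonic (l + r) : K) - harmonic l) := by
  induction r generalizing l with
  | zero => simp
  | succ r ihr =>
    induction l with
    | zero => simpa using sum_range_neg_one_pow_mul_choose_succ_div_succ (K := K) (r + 1)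
    | succ l ihl =>
      have hpascal : ∑ m ∈ range (r + 1),
            (-1 : K) ^ m * (l + 1 + (r + 1)).choose (l + 1 + m + 1) / (m + 1)
          = ∑ m ∈ range (r + 1), (-1 : K) ^ m * (l + (r + 1)).choose (l + m + 1) / (m + 1)
            + ∑ m ∈ range r, (-1 : K) ^ m * (l + 1 + r).choose (l + 1 + m + 1) / (m + 1) := by
        have hext :
            ∑ m ∈ range r, (-1 : K) ^ m * (l + 1 + r).choose (l + 1 + m + 1) / (m + 1)
              = ∑ m ∈ range (r + 1),
                  (-1 : K) ^ m * (l + 1 + r).choose (l + 1 + m + 1) / (m + 1) := by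
          rw [sum_range_succ, Nat.choose_eq_zero_of_lt (by omega)]
          simp
        rw [hext, ← sum_add_distrib]
        refine sum_congr rfl fun m _ => ?_
        rw [show l + 1 + (r + 1) = l + (r + 1) + 1 by ring,
          show l + 1 + m + 1 = l + m + 1 + 1 by ring, Nat.choose_succ_succ',
          show l + 1 + r = l + (r + 1) by ring]
        push_cast
        ring
      have hkey :
          ((l + r + 1).choose (l + 1) : K) * (l + 1) = (l + r + 1).choose l * (r + 1) := by
        have h := Nat.choose_succ_right_eq (l + r + 1) l
        rw [show l + r + 1 - l = r + 1 by omega] at h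
        exact_mod_cast h
      rw [hpascal, ihl, ihr (l + 1), show l + 1 + (r + 1) = l + r + 1 + 1 by ring,
        show l + (r + 1) = l + r + 1 by ring, show l + 1 + r = l + r + 1 by ring,
        Nat.choose_succ_succ (l + r + 1) l, harmonic_succ (l + r + 1), harmonic_succ l]
      have hl : (l : K) + 1 ≠ 0 := Nat.cast_add_one_ne_zero l
      have hn : (l : K) + r + 1 + 1 ≠ 0 := by exact_mod_cast Nat.succ_ne_zero (l + r + 1)
      push_cast
      field_simp
      linear_combination -hkey

end Harmonic

section Coefficients

theorem factorial_mul_factorial_div_factorial_mul_factorial {l r j : ℕ} (hj : j ≤ l + r) :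
    ((l.factorial * r.factorial : ℕ) : ℝ) / ((j.factorial * (l + r - j).factorial : ℕ) : ℝ)
      = (l + r).choose j / (l + r).choose l := by
  have hj' := Nat.choose_mul_factorial_mul_factorial hj
  have hl := Nat.choose_mul_factorial_mul_factorial (Nat.le_add_right l r)
  rw [Nat.add_sub_cancel_left] at hl
  have h : l.factorial * r.factorial * (l + r).choose l
      = (l + r).choose j * (j.factorial * (l + r - j).factorial) := by
    rw [← mul_assoc, hj', ← hl]
    ring
  rw [div_eq_div_iff (by positivity) (by simp [Nat.choose_eq_zero_iff])]
  exact_mod_cast h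

theorem aCoef_of_ne_zero {l r : ℕ} {k : ℤ} (hk : k ∈ Icc (-(l : ℤ)) r) (hk0 : k ≠ 0) :
    aCoef l r k = -((-1 : ℝ) ^ k / k) * (l + r).choose (l + k).toNat / (l + r).choose l := by
  rw [mem_Icc] at hk
  rw [aCoef, if_neg hk0, mul_div_assoc, mul_div_assoc,
    show ((r : ℤ) - k).toNat = l + r - (l + k).toNat by omega,
    factorial_mul_factorial_div_factorial_mul_factorial (by omega)]

theorem aCoef_natCast_add_one {l r m : ℕ} (hm : m < r) :
    aCoef l r (m + 1)
      = (-1 : ℝ) ^ m * (l + r).choose (l + m + 1) / (m + 1) / (l + r).choose l := by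
  rw [aCoef_of_ne_zero (by simp; omega) (by omega),
    show ((l : ℤ) + (m + 1)).toNat = l + m + 1 by omega, zpow_add_one₀ (by norm_num),
    zpow_natCast]
  push_cast
  ring

theorem aCoef_neg_natCast_add_one {l r m : ℕ} (hm : m < l) :
    aCoef l r (-(m + 1)) =
      -((-1 : ℝ) ^ m * (r + l).choose (r + m + 1) / (m + 1) / (r + l).choose r) := by
  rw [aCoef_of_ne_zero (by simp; omega) (by omega),
    show ((l : ℤ) + -(m + 1)).toNat = l - (m + 1) by omega,
    Nat.choose_symm_of_eq_add (show l + r = l - (m + 1) + (r + m + 1) by omega),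
    Nat.choose_symm_add, add_comm l r, zpow_neg, zpow_add_one₀ (by norm_num), zpow_natCast,
    mul_inv, ← inv_pow, inv_neg_one]
  push_cast
  field_simp

theorem sum_Icc_erase_zero {M : Type*} [AddCommMonoid M] (l r : ℕ) (f : ℤ → M) :
    ∑ k ∈ (Icc (-(l : ℤ)) r).erase 0, f k
      = ∑ m ∈ range l, f (-(m + 1)) + ∑ m ∈ range r, f (m + 1) := by
  have hsplit : (Icc (-(l : ℤ)) r).erase 0
      = (range l).image (fun m : ℕ => -((m : ℤ) + 1))
        ∪ (range r).image (fun m : ℕ => (m : ℤ) + 1) := by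
    ext k
    simp only [mem_erase, mem_Icc, mem_union, mem_image, mem_range]
    constructor
    · intro hk
      rcases lt_or_gt_of_ne hk.1 with _ | _
      · exact Or.inl ⟨(-k - 1).toNat, by omega, by omega⟩
      · exact Or.inr ⟨(k - 1).toNat, by omega, by omega⟩
    · rintro (⟨m, hm, rfl⟩ | ⟨m, hm, rfl⟩) <;> omega
  rw [hsplit, sum_union, sum_image, sum_image]
  · intro a _ b _ h; simpa using h
  · intro a _ b _ h; simpa using h
  · simp only [disjoint_left, mem_image, mem_range]
    rintro _ ⟨a, _, rfl⟩ ⟨b, _, h⟩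
    omega

theorem sum_aCoef (l r : ℕ) : ∑ k ∈ Icc (-(l : ℤ)) r, aCoef l r k = 0 := by
  have hzero : aCoef l r 0 = harmonic l - harmonic r := by
    rw [aCoef, if_pos rfl, sum_Icc_erase_zero]
    simp only [harmonic, Rat.cast_sum]
    push_cast
    simp only [one_div, inv_neg, sum_neg_distrib]
    ring
  have hpos : ∑ m ∈ range r, aCoef l r (m + 1) = harmonic (l + r) - harmonic l := by
    rw [sum_congr rfl fun m hm => aCoef_natCast_add_one (mem_range.mp hm), ← sum_div,
      sum_range_neg_one_pow_mul_choose_add_div,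
      mul_div_cancel_left₀ _ (by simp [Nat.choose_eq_zero_iff])]
  have hneg : ∑ m ∈ range l, aCoef l r (-(m + 1)) = -(harmonic (r + l) - harmonic r) := by
    rw [sum_congr rfl fun m hm => aCoef_neg_natCast_add_one (mem_range.mp hm), sum_neg_distrib,
      ← sum_div, sum_range_neg_one_pow_mul_choose_add_div,
      mul_div_cancel_left₀ _ (by simp [Nat.choose_eq_zero_iff])]
  rw [← add_sum_erase _ _ (by simp : (0 : ℤ) ∈ Icc (-(l : ℤ)) r), sum_Icc_erase_zero, hzero,
    hpos, hneg, add_comm r l]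
  ring

theorem lam0_one (l r : ℕ) : lam0 l r 1 = 0 := by
  simp [lam0, ← Complex.ofReal_sum, sum_aCoef]

end Coefficients

section Symbol

open Complex

theorem sum_Icc_choose_mul_zpow {K : Type*} [Field K] (l r : ℕ) {x : K} (hx : x ≠ 0) :
    ∑ k ∈ Icc (-(l : ℤ)) r, ((l + r).choose (l + k).toNat : K) * x ^ k
      = x ^ (-(l : ℤ)) * (1 + x) ^ (l + r) := by
  rw [add_comm 1 x, add_pow, mul_sum]
  refine sum_nbij' (fun k => (l + k).toNat) (fun j => (j : ℤ) - l) ?_ ?_ ?_ ?_ ?_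
  all_goals intro k hk; simp only [mem_Icc, mem_range] at hk ⊢
  · omega
  · omega
  · omega
  · omega
  · rw [one_pow, mul_one, ← zpow_natCast, Int.toNat_of_nonneg (by omega), ← mul_assoc,
      ← zpow_add₀ hx, neg_add_cancel_left, mul_comm]

theorem intCast_mul_aCoef {l r : ℕ} {k : ℤ} (hk : k ∈ Icc (-(l : ℤ)) r) :
    (k : ℝ) * aCoef l r k
      = (if k = 0 then 1 else 0)
        - (-1 : ℝ) ^ k * (l + r).choose (l + k).toNat / (l + r).choose l := by
  split_ifs with hk0
  · simp [hk0, Nat.choose_eq_zero_iff]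
  · rw [aCoef_of_ne_zero hk hk0]
    field_simp
    simp

theorem sum_intCast_mul_aCoef_mul_zpow (l r : ℕ) {w : ℂ} (hw : w ≠ 0) :
    ∑ k ∈ Icc (-(l : ℤ)) r, ((k * aCoef l r k : ℝ) : ℂ) * w ^ k
      = 1 - (-w) ^ (-(l : ℤ)) * (1 - w) ^ (l + r) / (l + r).choose l := by
  rw [sum_congr rfl fun k hk => by rw [intCast_mul_aCoef hk]]
  push_cast [apply_ite ((↑) : ℝ → ℂ)]
  simp only [sub_mul, sum_sub_distrib, ite_mul, one_mul, zero_mul, sum_ite_eq', mem_Icc]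
  rw [sub_eq_add_neg (1 : ℂ) w, ← sum_Icc_choose_mul_zpow l r (neg_ne_zero.mpr hw), sum_div,
    if_pos (by omega), zpow_zero]
  congr 1
  refine sum_congr rfl fun k _ => ?_
  rw [show -w = -1 * w by ring, mul_zpow]
  ring

theorem hasDerivAt_lam0_exp_mul_I (l r : ℕ) (z : ℂ) :
    HasDerivAt (fun z => lam0 l r (exp (z * I)))
      (-I * ∑ k ∈ Icc (-(l : ℤ)) r, ((k * aCoef l r k : ℝ) : ℂ) * exp (z * I) ^ k) z := by
  have hterm (k : ℤ) : HasDerivAt (fun z => (aCoef l r k : ℂ) * exp (z * I) ^ k)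
      ((aCoef l r k : ℂ) * (k * exp (z * I) ^ (k - 1) * (exp (z * I) * (1 * I)))) z :=
    ((hasDerivAt_zpow k (exp (z * I)) (Or.inl (exp_ne_zero _))).comp z
      ((hasDerivAt_id' z).mul_const I).cexp).const_mul _
  unfold lam0
  refine (HasDerivAt.fun_sum fun k _ => hterm k).fun_neg.congr_deriv ?_
  rw [mul_sum, ← sum_neg_distrib]
  refine sum_congr rfl fun k _ => ?_
  rw [zpow_sub_one₀ (exp_ne_zero _)]
  push_cast
  field_simp

theorem hasDerivAt_re_lam0_exp_mul_I (l r : ℕ) (θ : ℝ) :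
    HasDerivAt (fun θ : ℝ => (lam0 l r (exp (θ * I))).re)
      (-(((-exp (θ * I)) ^ (-(l : ℤ)) * (1 - exp (θ * I)) ^ (l + r)).im / (l + r).choose l))
      θ := by
  have h := (hasDerivAt_lam0_exp_mul_I l r θ).real_of_complex
  rw [sum_intCast_mul_aCoef_mul_zpow l r (exp_ne_zero _)] at h
  convert h using 1
  simp

theorem neg_exp_zpow_mul_one_sub_exp_pow {l r : ℕ} (h : r ≤ l) (θ : ℝ) :
    (-exp (θ * I)) ^ (-(l : ℤ)) * (1 - exp (θ * I)) ^ (l + r)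
      = ((2 * Real.sin (θ / 2)) ^ (l + r) : ℝ)
        * (Real.sin (θ / 2) + Real.cos (θ / 2) * I) ^ (l - r) := by
  have hpyth : (Real.sin (θ / 2) : ℂ) ^ 2 + (Real.cos (θ / 2) : ℂ) ^ 2 = 1 := by
    exact_mod_cast Real.sin_sq_add_cos_sq (θ / 2)
  have hexp : exp (θ * I) = (Real.cos (θ / 2) + Real.sin (θ / 2) * I) ^ 2 := by
    rw [ofReal_cos, ofReal_sin, ← exp_mul_I, ← exp_nat_mul]
    push_cast
    ring_nf
  rw [ofReal_pow, ofReal_mul, ofReal_ofNat]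
  set s : ℂ := ↑(Real.sin (θ / 2))
  set v : ℂ := s + ↑(Real.cos (θ / 2)) * I
  set e : ℂ := ↑(Real.cos (θ / 2)) + s * I
  have hve : v * e = I := by linear_combination (s * ↑(Real.cos (θ / 2))) * I_sq + I * hpyth
  have hv : v ≠ 0 := left_ne_zero_of_mul (hve ▸ I_ne_zero)
  have h1 : -exp (θ * I) = (v ^ 2)⁻¹ := by
    refine eq_inv_of_mul_eq_one_left ?_
    rw [hexp]
    linear_combination (-(v * e + I)) * hve - I_sq
  have h2 : 1 - exp (θ * I) = 2 * s / v := by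
    rw [eq_div_iff hv, hexp]
    linear_combination (-e) * hve - s * I_sq
  clear_value v e s
  obtain ⟨d, rfl⟩ := Nat.exists_eq_add_of_le h
  rw [h1, h2, inv_zpow', neg_neg, zpow_natCast, Nat.add_sub_cancel_left, div_pow,
    mul_div_assoc', div_eq_iff (pow_ne_zero _ hv)]
  ring

theorem eq_neg_mul_sin_half_pow_of_hasDerivAt {f : ℝ → ℝ} {C : ℝ} {m : ℕ} (hm : m ≠ 0)
    (hf : ∀ θ, HasDerivAt f (-(C * m / 2 * Real.sin (θ / 2) ^ (m - 1) * Real.cos (θ / 2))) θ)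
    (h0 : f 0 = 0) (θ : ℝ) : f θ = -C * Real.sin (θ / 2) ^ m := by
  have hg (t : ℝ) : HasDerivAt (fun t => f t + C * Real.sin (t / 2) ^ m) 0 t := by
    refine ((hf t).add ((((hasDerivAt_id' t).div_const 2).sin.pow m).const_mul C)).congr_deriv ?_
    ring
  have h := is_const_of_deriv_eq_zero (fun t => (hg t).differentiableAt)
    (fun t => (hg t).deriv) θ 0
  simp only [zero_div, Real.sin_zero, zero_pow hm, mul_zero, add_zero, h0] at h
  linarith

theorem re_lam0_exp_mul_I_of_eq_add_one (r : ℕ) (θ : ℝ) :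
    (lam0 (r + 1) r (exp (θ * I))).re =
      -(2 ^ (2 * (r + 1)) * ((r + 1).factorial : ℝ) * (r.factorial : ℝ) /
          ((2 * r + 2).factorial : ℝ)) * Real.sin (θ / 2) ^ (2 * (r + 1)) := by
  refine eq_neg_mul_sin_half_pow_of_hasDerivAt (f := fun θ : ℝ => (lam0 _ r (exp (θ * I))).re)
    (by omega) (fun θ => ?_) (by simp [lam0_one]) θ
  convert hasDerivAt_re_lam0_exp_mul_I (r + 1) r θ using 1
  rw [neg_exp_zpow_mul_one_sub_exp_pow (by omega), im_ofReal_mul, show r + 1 - r = 1 by omega,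
    pow_one, Nat.cast_choose ℝ (by omega : r + 1 ≤ r + 1 + r),
    show r + 1 + r - (r + 1) = r by omega,
    show r + 1 + r = 2 * r + 1 by ring, show 2 * (r + 1) - 1 = 2 * r + 1 by omega,
    Nat.factorial_succ (2 * r + 1)]
  simp only [add_im, ofReal_im, mul_im, ofReal_re, I_re, I_im, mul_zero, mul_one, zero_add]
  push_cast
  field_simp
  ring

theorem re_lam0_exp_mul_I_of_eq_add_two (r : ℕ) (θ : ℝ) :
    (lam0 (r + 2) r (exp (θ * I))).re =
      -(2 ^ (2 * (r + 2)) * ((2 * r + 3 : ℕ) : ℝ) * ((r + 2).factorial : ℝ) *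
          (r.factorial : ℝ) / ((2 * r + 4).factorial : ℝ)) *
        Real.sin (θ / 2) ^ (2 * (r + 2)) := by
  refine eq_neg_mul_sin_half_pow_of_hasDerivAt (f := fun θ : ℝ => (lam0 _ r (exp (θ * I))).re)
    (by omega) (fun θ => ?_) (by simp [lam0_one]) θ
  convert hasDerivAt_re_lam0_exp_mul_I (r + 2) r θ using 1
  rw [neg_exp_zpow_mul_one_sub_exp_pow (by omega), im_ofReal_mul, show r + 2 - r = 2 by omega,
    Nat.cast_choose ℝ (by omega : r + 2 ≤ r + 2 + r), show r + 2 + r - (r + 2) = r by omega,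
    show r + 2 + r = 2 * r + 2 by ring, show 2 * (r + 2) - 1 = 2 * r + 3 by omega,
    Nat.factorial_succ (2 * r + 3), Nat.factorial_succ (2 * r + 2)]
  simp only [sq, mul_im, add_re, add_im, mul_re, ofReal_re, ofReal_im, I_re, I_im, mul_zero,
    mul_one, zero_add, sub_zero, add_zero]
  push_cast
  field_simp
  ring

end Symbol

theorem re_lam0_formula_and_neg_general (l r : ℕ) :
    ((l = r + 1) → ∀ θ : ℝ,
      (lam0 l r (Complex.exp (θ * Complex.I))).re =
        -(2 ^ (2 * (r + 1)) * (Nat.factorial (r + 1) : ℝ) * (Nat.factorial r : ℝ) /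
            (Nat.factorial (2 * r + 2) : ℝ)) * (Real.sin (θ / 2)) ^ (2 * (r + 1))) ∧
    ((l = r + 2) → ∀ θ : ℝ,
      (lam0 l r (Complex.exp (θ * Complex.I))).re =
        -(2 ^ (2 * (r + 2)) * ((2 * r + 3 : ℕ) : ℝ) * (Nat.factorial (r + 2) : ℝ) *
            (Nat.factorial r : ℝ) / (Nat.factorial (2 * r + 4) : ℝ)) *
          (Real.sin (θ / 2)) ^ (2 * (r + 2))) ∧
    ((r + 1 ≤ l ∧ l ≤ r + 2) →
      (∀ θ : ℝ, 0 < θ → θ < 2 * Real.pi →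
        (lam0 l r (Complex.exp (θ * Complex.I))).re < 0) ∧
      lam0 l r 1 = 0) := by
  refine ⟨?_, ?_, fun hl => ⟨fun θ hθ₀ hθ => ?_, lam0_one l r⟩⟩
  · rintro rfl θ
    exact re_lam0_exp_mul_I_of_eq_add_one r θ
  · rintro rfl θ
    exact re_lam0_exp_mul_I_of_eq_add_two r θ
  · have hsin : 0 < Real.sin (θ / 2) := Real.sin_pos_of_pos_of_lt_pi (by linarith) (by linarith)
    obtain rfl | rfl : l = r + 1 ∨ l = r + 2 := by omega
    · rw [re_lam0_exp_mul_I_of_eq_add_one, neg_mul, neg_lt_zero]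
      exact mul_pos (by positivity) (pow_pos hsin _)
    · rw [re_lam0_exp_mul_I_of_eq_add_two, neg_mul, neg_lt_zero]
      exact mul_pos (by positivity) (pow_pos hsin _)

theorem re_lam0_formula_and_neg (l r : ℕ) (hlr : 0 < l + r) :
    ((l = r + 1) → ∀ θ : ℝ,
      (lam0 l r (Complex.exp (θ * Complex.I))).re =
        -(2 ^ (2 * (r + 1)) * (Nat.factorial (r + 1) : ℝ) * (Nat.factorial r : ℝ) /
            (Nat.factorial (2 * r + 2) : ℝ)) * (Real.sin (θ / 2)) ^ (2 * (r + 1))) ∧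
    ((l = r + 2) → ∀ θ : ℝ,
      (lam0 l r (Complex.exp (θ * Complex.I))).re =
        -(2 ^ (2 * (r + 2)) * ((2 * r + 3 : ℕ) : ℝ) * (Nat.factorial (r + 2) : ℝ) *
            (Nat.factorial r : ℝ) / (Nat.factorial (2 * r + 4) : ℝ)) *
          (Real.sin (θ / 2)) ^ (2 * (r + 2))) ∧
    ((r + 1 ≤ l ∧ l ≤ r + 2) →
      (∀ θ : ℝ, 0 < θ → θ < 2 * Real.pi →
        (lam0 l r (Complex.exp (θ * Complex.I))).re < 0) ∧
      lam0 l r 1 = 0) :=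
  re_lam0_formula_and_neg_general l r
end

section
/- Let q ≥ 1 be an integer and b_k, λ_∞ as in the context. Then λ_∞(e^{iθ}) = b_0 + 2·Σ_{k=1}^{q} b_k cos(kθ) is real for every real θ; λ_∞(1) = 0; and λ_∞(e^{iθ}) < 0 for all 0 < θ < 2π. -/
/-- The symbol `λ_∞(s) = Σ_{k=-q}^{q} b_k s^k` of the diffusion discretization. -/
noncomputable def lamInf (q : ℕ) (s : ℂ) : ℂ :=
  ∑ k ∈ Finset.Icc (-(q : ℤ)) (q : ℤ), (bCoef q k : ℂ) * s ^ k

/-!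
Put `c m = 2 / (m² C(2m, m))`. The symbol is the Laurent polynomial
`λ_q(s) = -∑_{m=1}^{q} c m (2 - s - s⁻¹)^m`: passing from `q` to `q + 1` changes `b_k` by
`-c (q+1) (-1)^k C(2q+2, q+1+k)`, which is the coefficient of `s^k` in
`-c (q+1) (2 - s - s⁻¹)^(q+1)`. At `s = 1` every term vanishes, and at `s = e^{iθ}` we have
`2 - s - s⁻¹ = 2 - 2 cos θ`, which is positive for `0 < θ < 2π`, so every term is negative.
-/

open Finset
open scoped Nat

theorem sum_Icc_neg_eq_sum_range {M : Type*} [AddCommMonoid M] (n : ℕ) (f : ℤ → M) :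
    ∑ k ∈ Icc (-(n : ℤ)) n, f k = ∑ j ∈ range (2 * n + 1), f (j - n) := by
  symm
  refine sum_nbij' (fun j => j - n) (fun k => (k + n).toNat) ?_ ?_ ?_ ?_ (fun _ _ => rfl) <;>
    intro x hx <;> simp at hx ⊢ <;> omega

theorem sum_Icc_neg_eq_add_sum_Icc {M : Type*} [AddCommMonoid M] (n : ℕ) (f : ℤ → M) :
    ∑ k ∈ Icc (-(n : ℤ)) n, f k = f 0 + ∑ k ∈ Icc 1 n, (f k + f (-k)) := by
  induction n with
  | zero => simp
  | succ n ih =>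
    have h : Icc (-((n + 1 : ℕ) : ℤ)) (n + 1 : ℕ) =
        insert (-(n + 1 : ℤ)) (insert (n + 1 : ℤ) (Icc (-(n : ℤ)) n)) := by
      ext x; simp; omega
    rw [h, sum_insert (by simp; omega), sum_insert (by simp), ih, sum_Icc_succ_top (by omega)]
    push_cast
    abel

theorem two_sub_sub_inv_pow {K : Type*} [Field K] (n : ℕ) {s : K} (hs : s ≠ 0) :
    (2 - s - s⁻¹) ^ n =
      ∑ k ∈ Icc (-(n : ℤ)) n, (-1) ^ k * ((2 * n).choose (n + k).toNat : K) * s ^ k := by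
  have h : 2 - s - s⁻¹ = -s⁻¹ * (-s + 1) ^ 2 := by field_simp; ring
  rw [h, mul_pow, ← pow_mul, add_pow, mul_sum, sum_Icc_neg_eq_sum_range]
  refine sum_congr rfl fun j _ => ?_
  rw [show ((n : ℤ) + (j - n)).toNat = j by omega, zpow_sub₀ hs, zpow_sub₀ (by norm_num),
    zpow_natCast, zpow_natCast, zpow_natCast, zpow_natCast, neg_pow, neg_pow s, inv_pow, one_pow,
    div_eq_mul_inv, div_eq_mul_inv, ← inv_pow (-1 : K), inv_neg, inv_one]
  ring

/-- `θ² = ∑_{m ≥ 1} arcsinSqCoef m * (2 - 2 cos θ)^m` is the series of `4 arcsin² (x / 2)` in `x²`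
at `x = 2 sin (θ / 2)`, so `λ_q(e^{iθ})` is its truncation at order `q` (up to sign). -/
noncomputable def arcsinSqCoef (m : ℕ) : ℝ := 2 / ((m : ℝ) ^ 2 * (2 * m).choose m)

theorem arcsinSqCoef_pos {m : ℕ} (hm : 0 < m) : 0 < arcsinSqCoef m := by
  have : 0 < (2 * m).choose m := Nat.choose_pos (by omega)
  unfold arcsinSqCoef; positivity

theorem arcsinSqCoef_succ_mul_choose (q : ℕ) {a b : ℕ} (hab : a + b = 2 * (q + 1)) :
    arcsinSqCoef (q + 1) * (2 * (q + 1)).choose a = 2 * (q ! * q !) / (a ! * b !) := by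
  rw [arcsinSqCoef, Nat.cast_choose ℝ (show a ≤ 2 * (q + 1) by omega),
    Nat.cast_choose ℝ (show q + 1 ≤ 2 * (q + 1) by omega), show 2 * (q + 1) - a = b by omega,
    show 2 * (q + 1) - (q + 1) = q + 1 by omega]
  push_cast [Nat.factorial_succ]
  field_simp

theorem bCoef_neg_s4 (q : ℕ) (k : ℤ) : bCoef q (-k) = bCoef q k := by
  rcases eq_or_ne k 0 with rfl | hk
  · simp
  · rw [bCoef, bCoef, if_neg (neg_ne_zero.mpr hk), if_neg hk, zpow_neg, ← inv_zpow, inv_neg,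
      inv_one, sub_neg_eq_add, ← sub_eq_add_neg]
    push_cast
    ring

theorem bCoef_eq_factorial {q : ℕ} {k : ℤ} (hk : k ≠ 0) {a b : ℕ} (ha : (a : ℤ) = q + k)
    (hb : (b : ℤ) = q - k) :
    bCoef q k = -(2 * (-1) ^ k / k ^ 2) * (q ! * q !) / (a ! * b !) := by
  rw [bCoef, if_neg hk, ← ha, ← hb, Int.toNat_natCast, Int.toNat_natCast]
  push_cast
  rfl

theorem bCoef_succ_zero (q : ℕ) : bCoef (q + 1) 0 = bCoef q 0 - 2 / ((q : ℝ) + 1) ^ 2 := by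
  simp only [bCoef, sum_Icc_succ_top (by omega : 1 ≤ q + 1)]
  push_cast
  ring

theorem bCoef_succ (q : ℕ) {k : ℤ} (hk : k ∈ Icc (-((q + 1 : ℕ) : ℤ)) (q + 1 : ℕ)) :
    bCoef (q + 1) k = (if k ∈ Icc (-(q : ℤ)) q then bCoef q k else 0) -
      arcsinSqCoef (q + 1) * (-1) ^ k * (2 * (q + 1)).choose (((q + 1 : ℕ) : ℤ) + k).toNat := by
  rw [mem_Icc] at hk
  obtain ⟨a, ha⟩ : ∃ a : ℕ, (a : ℤ) = (q + 1 : ℕ) + k := ⟨_, Int.toNat_of_nonneg (by omega)⟩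
  obtain ⟨b, hb⟩ : ∃ b : ℕ, (b : ℤ) = (q + 1 : ℕ) - k := ⟨_, Int.toNat_of_nonneg (by omega)⟩
  rw [← ha, Int.toNat_natCast, mul_right_comm,
    arcsinSqCoef_succ_mul_choose q (by omega : a + b = 2 * (q + 1))]
  rcases eq_or_ne k 0 with rfl | hk0
  · rw [if_pos (by simp), bCoef_succ_zero, show a = q + 1 by omega, show b = q + 1 by omega]
    push_cast [Nat.factorial_succ]
    field_simp
  have hab : (a : ℝ) * b = ((q : ℝ) + 1) ^ 2 - (k : ℝ) ^ 2 := by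
    rw [← Int.cast_natCast (R := ℝ) a, ← Int.cast_natCast (R := ℝ) b, ha, hb]
    push_cast
    ring
  rw [bCoef_eq_factorial hk0 ha hb]
  split_ifs with hin
  · rw [mem_Icc] at hin
    obtain ⟨a, rfl⟩ : ∃ a', a = a' + 1 := ⟨a - 1, by omega⟩
    obtain ⟨b, rfl⟩ : ∃ b', b = b' + 1 := ⟨b - 1, by omega⟩
    rw [bCoef_eq_factorial hk0 (a := a) (b := b) (by push_cast at ha; omega)
      (by push_cast at hb; omega)]
    push_cast [Nat.factorial_succ] at hab ⊢
    field_simp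
    linear_combination hab
  · rw [mem_Icc] at hin
    have hk2 : (k : ℝ) ^ 2 = ((q : ℝ) + 1) ^ 2 := by
      obtain h | h : a = 0 ∨ b = 0 := by omega
      all_goals simp only [h, Nat.cast_zero, zero_mul, mul_zero] at hab; linarith
    push_cast [Nat.factorial_succ]
    field_simp
    linear_combination 2 * (-1 : ℝ) ^ k * (q ! : ℝ) ^ 2 * hk2

theorem lamInf_succ (q : ℕ) {s : ℂ} (hs : s ≠ 0) :
    lamInf (q + 1) s = lamInf q s - arcsinSqCoef (q + 1) * (2 - s - s⁻¹) ^ (q + 1) := by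
  have hq : lamInf q s = ∑ k ∈ Icc (-((q + 1 : ℕ) : ℤ)) (q + 1 : ℕ),
      if k ∈ Icc (-(q : ℤ)) q then (bCoef q k : ℂ) * s ^ k else 0 := by
    rw [sum_ite_mem, inter_eq_right.mpr fun k => by simp only [mem_Icc]; omega, lamInf]
  rw [hq, two_sub_sub_inv_pow _ hs, mul_sum, ← sum_sub_distrib, lamInf]
  refine sum_congr rfl fun k hk => ?_
  rw [bCoef_succ q hk]
  split_ifs <;> push_cast <;> ring

theorem lamInf_eq_neg_sum (q : ℕ) {s : ℂ} (hs : s ≠ 0) :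
    lamInf q s = -∑ m ∈ Icc 1 q, (arcsinSqCoef m : ℂ) * (2 - s - s⁻¹) ^ m := by
  induction q with
  | zero => simp [lamInf, bCoef]
  | succ q ih => rw [lamInf_succ q hs, ih, sum_Icc_succ_top (by omega)]; ring

theorem lamInf_exp_mul_I (q : ℕ) (θ : ℝ) :
    lamInf q (Complex.exp (θ * Complex.I)) =
      ((bCoef q 0 + 2 * ∑ k ∈ Icc 1 q, bCoef q (k : ℤ) * Real.cos (k * θ) : ℝ) : ℂ) := by
  rw [lamInf, sum_Icc_neg_eq_add_sum_Icc, zpow_zero, mul_one, mul_sum]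
  push_cast
  congr 1
  refine sum_congr rfl fun k _ => ?_
  rw [bCoef_neg_s4, ← Complex.exp_int_mul, ← Complex.exp_int_mul, Complex.cos]
  push_cast
  ring_nf

theorem two_sub_exp_mul_I_sub_inv (θ : ℝ) :
    2 - Complex.exp (θ * Complex.I) - (Complex.exp (θ * Complex.I))⁻¹ =
      ((2 - 2 * Real.cos θ : ℝ) : ℂ) := by
  push_cast
  rw [← Complex.exp_neg, Complex.two_cos, neg_mul]
  ring

theorem lamInf_real_zero_neg (q : ℕ) (hq : 1 ≤ q) :
    (∀ θ : ℝ, lamInf q (Complex.exp (θ * Complex.I)) =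
      ((bCoef q 0 + 2 * ∑ k ∈ Finset.Icc 1 q, bCoef q (k : ℤ) * Real.cos (k * θ) : ℝ) : ℂ)) ∧
    lamInf q 1 = 0 ∧
    (∀ θ : ℝ, 0 < θ → θ < 2 * Real.pi →
      (lamInf q (Complex.exp (θ * Complex.I))).re < 0) := by
  refine ⟨lamInf_exp_mul_I q, ?_, fun θ hθ₀ hθ₁ => ?_⟩
  · rw [lamInf_eq_neg_sum q one_ne_zero, neg_eq_zero]
    refine sum_eq_zero fun m hm => ?_
    rw [inv_one, show (2 - 1 - 1 : ℂ) = 0 by norm_num, zero_pow (by simp at hm; omega), mul_zero]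
  · have hcos : Real.cos θ < 1 := (Real.cos_le_one θ).lt_of_ne fun h => by
      linarith [(Real.cos_eq_one_iff_of_lt_of_lt (by linarith [Real.pi_pos]) hθ₁).mp h]
    rw [lamInf_eq_neg_sum q (Complex.exp_ne_zero _), two_sub_exp_mul_I_sub_inv, Complex.neg_re,
      Complex.re_sum, neg_neg_iff_pos]
    refine sum_pos (fun m hm => ?_) ⟨1, by simp [hq]⟩
    rw [← Complex.ofReal_pow, ← Complex.ofReal_mul, Complex.ofReal_re]
    exact mul_pos (arcsinSqCoef_pos (by simp at hm; omega)) (pow_pos (by linarith) m)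
end

section
/- Let l, r ≥ 0 be integers with r + 1 ≤ l ≤ r + 2, and let λ₀ be as in the context; write y₀(θ) = Im λ₀(e^{iθ}). Then for all θ ∈ [-π, π], y₀(θ)² ≤ (1 + 2^{l+r} · l! · r! / (l+r)!)² · θ². -/
lemma keySum (l r : ℕ) :
    ∑ k ∈ Finset.Icc (-(l : ℤ)) (r : ℤ),
      ((Nat.factorial l * Nat.factorial r : ℕ) : ℝ) /
        ((Nat.factorial ((l : ℤ) + k).toNat * Nat.factorial ((r : ℤ) - k).toNat : ℕ) : ℝ)
    = 2 ^ (l + r) * (Nat.factorial l : ℝ) * (Nat.factorial r : ℝ) /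
        (Nat.factorial (l + r) : ℝ) := by
  have h1 : ∑ k ∈ Finset.Icc (-(l : ℤ)) (r : ℤ),
      ((Nat.factorial l * Nat.factorial r : ℕ) : ℝ) /
        ((Nat.factorial ((l : ℤ) + k).toNat * Nat.factorial ((r : ℤ) - k).toNat : ℕ) : ℝ)
      = ∑ j ∈ Finset.range (l + r + 1),
        ((Nat.factorial l * Nat.factorial r : ℕ) : ℝ) /
          ((Nat.factorial j * Nat.factorial (l + r - j) : ℕ) : ℝ) := by
    refine Finset.sum_nbij' (fun k => (k + (l : ℤ)).toNat) (fun j => (j : ℤ) - l)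
      ?_ ?_ ?_ ?_ ?_
    · intro k hk
      simp only [Finset.mem_Icc] at hk
      simp only [Finset.mem_range]
      omega
    · intro j hj
      simp only [Finset.mem_range] at hj
      simp only [Finset.mem_Icc]
      omega
    · intro k hk; simp only [Finset.mem_Icc] at hk; omega
    · intro j hj; simp only [Finset.mem_range] at hj; omega
    · intro k hk
      simp only [Finset.mem_Icc] at hk
      have h2 : (l : ℤ) + k = ((k + (l : ℤ)).toNat : ℤ) := by omega
      have h3 : ((r : ℤ) - k).toNat = l + r - (k + (l : ℤ)).toNat := by omega
      rw [h2, h3, Int.toNat_natCast]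
  have h2 : ∀ j ∈ Finset.range (l + r + 1),
      ((Nat.factorial l * Nat.factorial r : ℕ) : ℝ) /
          ((Nat.factorial j * Nat.factorial (l + r - j) : ℕ) : ℝ)
      = (Nat.factorial l : ℝ) * (Nat.factorial r : ℝ) / (Nat.factorial (l + r) : ℝ)
          * (((l + r).choose j : ℕ) : ℝ) := by
    intro j hj
    have hjle : j ≤ l + r := by
      simpa [Nat.lt_succ_iff] using Finset.mem_range.mp hj
    have h := Nat.choose_mul_factorial_mul_factorial hjle
    have hne : ((Nat.factorial j * Nat.factorial (l + r - j) : ℕ) : ℝ) ≠ 0 := by positivity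
    have hne2 : (Nat.factorial (l + r) : ℝ) ≠ 0 := by positivity
    field_simp
    push_cast [← h]
    ring
  have hs : (∑ j ∈ Finset.range (l + r + 1), (((l + r).choose j : ℕ) : ℝ))
      = ((2 ^ (l + r) : ℕ) : ℝ) := by
    rw [← Nat.cast_sum, Nat.sum_range_choose]
  rw [h1, Finset.sum_congr rfl h2, ← Finset.mul_sum, hs]
  push_cast
  ring

/-- Quadratic bound on the imaginary part of the advection symbol:
`y₀(θ)² ≤ (1 + 2^{l+r}·l!·r!/(l+r)!)²·θ²` on `[-π, π]`. -/
theorem lam0_im_sq_bound (l r : ℕ) (h1 : r + 1 ≤ l) (h2 : l ≤ r + 2) :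
    ∀ θ ∈ Set.Icc (-Real.pi) Real.pi,
      (lam0 l r (Complex.exp (θ * Complex.I))).im ^ 2 ≤
        (1 + 2 ^ (l + r) * (Nat.factorial l : ℝ) * (Nat.factorial r : ℝ) /
            (Nat.factorial (l + r) : ℝ)) ^ 2 * θ ^ 2 := by
  intro θ _
  set B : ℝ := 2 ^ (l + r) * (Nat.factorial l : ℝ) * (Nat.factorial r : ℝ) /
      (Nat.factorial (l + r) : ℝ) with hB
  have hBnonneg : 0 ≤ B := by positivity
  -- the imaginary part
  have him : (lam0 l r (Complex.exp (θ * Complex.I))).im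
      = -∑ k ∈ Finset.Icc (-(l : ℤ)) (r : ℤ), aCoef l r k * Real.sin (k * θ) := by
    rw [lam0, Complex.neg_im, Complex.im_sum]
    congr 1
    refine Finset.sum_congr rfl fun k _ => ?_
    have : Complex.exp (θ * Complex.I) ^ k = Complex.exp ((k * θ : ℝ) * Complex.I) := by
      rw [← Complex.exp_int_mul]
      push_cast
      ring_nf
    rw [this]
    simp [Complex.exp_im, Complex.exp_re]
  -- termwise bound
  have hterm : ∀ k ∈ Finset.Icc (-(l : ℤ)) (r : ℤ),
      |aCoef l r k * Real.sin (k * θ)| ≤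
        ((Nat.factorial l * Nat.factorial r : ℕ) : ℝ) /
          ((Nat.factorial ((l : ℤ) + k).toNat * Nat.factorial ((r : ℤ) - k).toNat : ℕ) : ℝ)
          * |θ| := by
    intro k hk
    rcases eq_or_ne k 0 with rfl | hk0
    · simp
      positivity
    · have hkabs : |aCoef l r k| = ((Nat.factorial l * Nat.factorial r : ℕ) : ℝ) /
          (|(k : ℝ)| * ((Nat.factorial ((l : ℤ) + k).toNat *
            Nat.factorial ((r : ℤ) - k).toNat : ℕ) : ℝ)) := by
        have hm1 : |((-1 : ℝ)) ^ k| = 1 := by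
          rcases Int.even_or_odd k with he | ho
          · rw [he.neg_one_zpow, abs_one]
          · rw [ho.neg_one_zpow, abs_neg, abs_one]
        rw [aCoef, if_neg hk0, abs_div, abs_mul, abs_neg, abs_div, hm1,
          Nat.abs_cast, Nat.abs_cast]
        ring
      have hkne : |(k : ℝ)| ≠ 0 := by
        simpa using (Int.cast_ne_zero (α := ℝ)).mpr hk0
      have hCne : ((Nat.factorial ((l : ℤ) + k).toNat *
          Nat.factorial ((r : ℤ) - k).toNat : ℕ) : ℝ) ≠ 0 := by positivity
      have hs : |Real.sin (k * θ)| ≤ |(k : ℝ)| * |θ| := by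
        rw [← abs_mul]; exact Real.abs_sin_le_abs
      calc |aCoef l r k * Real.sin (k * θ)| = |aCoef l r k| * |Real.sin (k * θ)| := abs_mul _ _
        _ ≤ |aCoef l r k| * (|(k : ℝ)| * |θ|) :=
            mul_le_mul_of_nonneg_left hs (abs_nonneg _)
        _ = ((Nat.factorial l * Nat.factorial r : ℕ) : ℝ) /
            ((Nat.factorial ((l : ℤ) + k).toNat * Nat.factorial ((r : ℤ) - k).toNat : ℕ) : ℝ)
            * |θ| := by
          rw [hkabs]; field_simp
  -- assemble
  have habs : |(lam0 l r (Complex.exp (θ * Complex.I))).im| ≤ B * |θ| := by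
    rw [him, abs_neg]
    calc |∑ k ∈ Finset.Icc (-(l : ℤ)) (r : ℤ), aCoef l r k * Real.sin (k * θ)|
        ≤ ∑ k ∈ Finset.Icc (-(l : ℤ)) (r : ℤ), |aCoef l r k * Real.sin (k * θ)| :=
          Finset.abs_sum_le_sum_abs _ _
      _ ≤ ∑ k ∈ Finset.Icc (-(l : ℤ)) (r : ℤ),
            ((Nat.factorial l * Nat.factorial r : ℕ) : ℝ) /
              ((Nat.factorial ((l : ℤ) + k).toNat *
                Nat.factorial ((r : ℤ) - k).toNat : ℕ) : ℝ) * |θ| :=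
          Finset.sum_le_sum hterm
      _ = B * |θ| := by rw [← Finset.sum_mul, keySum l r]
  have habs2 : |(lam0 l r (Complex.exp (θ * Complex.I))).im| ≤ (1 + B) * |θ| := by
    refine habs.trans ?_
    have := abs_nonneg θ
    nlinarith
  calc (lam0 l r (Complex.exp (θ * Complex.I))).im ^ 2
      = |(lam0 l r (Complex.exp (θ * Complex.I))).im| ^ 2 := (sq_abs _).symm
    _ ≤ ((1 + B) * |θ|) ^ 2 := pow_le_pow_left₀ (abs_nonneg _) habs2 2
    _ = (1 + B) ^ 2 * θ ^ 2 := by rw [mul_pow, sq_abs]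
end

section
/- Let p : ℂ → ℂ be a polynomial function with p(0) = 1 and p'(0) = 1 (i.e. p(z) = 1 + z + O(z²)). Then there exist ε₀ > 0 and M₀ > 0 such that for every z = x + iy ∈ ℂ satisfying -M₀·ε₀² < x < -M₀·y² and |y| < ε₀, one has |p(z)| < 1. -/
/-!
Write `p(z) = 1 + z + z² q(z)` and bound `|q| ≤ K` on the unit disc. By AM-GM,
`|1 + z| ≤ (|1 + z|² + 1) / 2 = 1 + x + |z|² / 2`, so `|p(z)| ≤ 1 + x + L |z|²` for any
`L ≥ K + 1/2`; taking also `L ≥ 1` keeps the region below inside the unit disc. On the parabolic region with `M₀ = 2L`, `ε₀ = 1 / (2L)` both `x²` and `y²` are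
below `-x / (2L)`, hence `L |z|² < -x` and `|p(z)| < 1`.
-/

open Polynomial

theorem Polynomial.eval_eq_coeff_zero_add_coeff_one_mul_add_sq_mul {R : Type*} [CommRing R]
    (p : R[X]) (z : R) :
    p.eval z = p.coeff 0 + p.coeff 1 * z + z ^ 2 * p.divX.divX.eval z := by
  conv_lhs => rw [← X_mul_divX_add p, ← X_mul_divX_add p.divX]
  simp only [eval_add, eval_mul, eval_X, eval_C, coeff_divX, zero_add]
  ring

theorem Polynomial.exists_norm_eval_sub_linear_le {𝕜 : Type*} [NormedField 𝕜] [ProperSpace 𝕜]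
    (p : 𝕜[X]) : ∃ K, ∀ z : 𝕜, ‖z‖ ≤ 1 →
      ‖p.eval z - (p.eval 0 + p.derivative.eval 0 * z)‖ ≤ K * ‖z‖ ^ 2 := by
  obtain ⟨K, hK⟩ := (isCompact_closedBall (0 : 𝕜) 1).exists_bound_of_continuousOn
    p.divX.divX.continuous.continuousOn
  refine ⟨K, fun z hz => ?_⟩
  rw [p.eval_eq_coeff_zero_add_coeff_one_mul_add_sq_mul z, coeff_zero_eq_eval_zero,
    ← p.taylor_coeff_one, taylor_zero, add_sub_cancel_left, norm_mul, norm_pow, mul_comm]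
  exact mul_le_mul_of_nonneg_right (hK z (by simpa using hz)) (by positivity)

theorem Complex.norm_one_add_le (z : ℂ) : ‖1 + z‖ ≤ 1 + z.re + ‖z‖ ^ 2 / 2 := by
  have h : ‖1 + z‖ ^ 2 = 1 + 2 * z.re + ‖z‖ ^ 2 := by
    rw [Complex.sq_norm, Complex.sq_norm, Complex.normSq_apply, Complex.normSq_apply]
    simp only [Complex.add_re, Complex.one_re, Complex.add_im, Complex.one_im]
    ring
  nlinarith [sq_nonneg (‖1 + z‖ - 1)]

theorem Complex.norm_sq_lt_of_mem_parabola {M ε : ℝ} (hM : 0 < M) {z : ℂ}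
    (hre : -(M * ε ^ 2) < z.re) (hre' : z.re < -(M * z.im ^ 2)) :
    ‖z‖ ^ 2 < -z.re * (M * ε ^ 2 + M⁻¹) := by
  have hx : 0 < -z.re := by nlinarith [sq_nonneg z.im]
  have hx2 : z.re * z.re < -z.re * (M * ε ^ 2) := by nlinarith
  have hy2 : z.im * z.im < -z.re * M⁻¹ := by
    rw [← sq, ← div_eq_mul_inv, lt_div_iff₀ hM]; linarith
  rw [Complex.sq_norm, Complex.normSq_apply, mul_add]
  linarith

/-- Any stability polynomial `p` with `p(0) = 1` and `p'(0) = 1` (i.e.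
`p(z) = 1 + z + O(z²)`) contains a parabolic region
`{z = x + iy : -M₀ε₀² < x < -M₀y², |y| < ε₀}` in the interior of its stability
region. -/
theorem stability_region_contains_parabolic_set (p : Polynomial ℂ)
    (h0 : p.eval 0 = 1) (h1 : p.derivative.eval 0 = 1) :
    ∃ ε₀ > (0 : ℝ), ∃ M₀ > (0 : ℝ), ∀ z : ℂ,
      -(M₀ * ε₀ ^ 2) < z.re → z.re < -(M₀ * z.im ^ 2) → |z.im| < ε₀ →
      ‖p.eval z‖ < 1 := by
  obtain ⟨K, hK⟩ := p.exists_norm_eval_sub_linear_le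
  simp only [h0, h1, one_mul] at hK
  set L := max (K + 1 / 2) 1
  have hL : 1 ≤ L := le_max_right _ _
  refine ⟨1 / (2 * L), by positivity, 2 * L, by positivity, fun z hre hre' _ => ?_⟩
  have hre₀ : -z.re < 1 / (2 * L) := by
    have : 2 * L * (1 / (2 * L)) ^ 2 = 1 / (2 * L) := by field_simp
    linarith
  have hLz : L * ‖z‖ ^ 2 < -z.re := by
    have h := Complex.norm_sq_lt_of_mem_parabola (by positivity) hre hre'
    have : 2 * L * (1 / (2 * L)) ^ 2 + (2 * L)⁻¹ = L⁻¹ := by field_simp; ring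
    rwa [this, ← div_eq_mul_inv, lt_div_iff₀ (by positivity), mul_comm] at h
  have hz1 : ‖z‖ ≤ 1 := by
    have : 1 / (2 * L) ≤ 1 := by rw [div_le_one (by positivity)]; linarith
    rw [← sq_le_one_iff₀ (norm_nonneg z)]
    nlinarith [sq_nonneg ‖z‖]
  calc ‖p.eval z‖ ≤ ‖1 + z‖ + ‖p.eval z - (1 + z)‖ := norm_le_norm_add_norm_sub' _ _
    _ ≤ (1 + z.re + ‖z‖ ^ 2 / 2) + K * ‖z‖ ^ 2 := add_le_add z.norm_one_add_le (hK z hz1)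
    _ ≤ 1 + z.re + L * ‖z‖ ^ 2 := by nlinarith [le_max_left (K + 1 / 2) 1, sq_nonneg ‖z‖]
    _ < 1 := by linarith
end

section
/- Let a⁻, a⁺ ∈ ℂ satisfy Re a⁻ > 0 and Re a⁺ < 0, let b ∈ ℝ with b < 0, and let R > 0. Then for every w ∈ ℂ with w² = R²·b² + (a⁻ + a⁺)², one has Re( R·b - (a⁻ - a⁺) + w ) < 0. (Applying this with a⁻ = a⁻(s), a⁺ = a⁺(s), b = b(s) for |s| = 1, s ≠ 1, where a⁻ is a stable upwind-biased discretization of ∂x, a⁺ its downwind-biased counterpart, and b the central discretization of ∂xx — so that Re a⁻(s) > 0, Re a⁺(s) < 0, b(s) < 0 — this shows that every eigenvalue ½(R·b(s) - (a⁻(s) - a⁺(s)) ± √(R²b(s)² + (a⁻(s)+a⁺(s))²)) of the semi-discretized partially dissipative wave system with s ≠ 1 has negative real part; hence the coefficient matrix is semistable for all R > 0.) -/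
/-- If `Re a⁻ > 0`, `Re a⁺ < 0`, `b < 0` is real and `R > 0`, then both roots
`½(R·b - (a⁻ - a⁺) ± √(R²b² + (a⁻ + a⁺)²))` of the reduced characteristic
polynomial of the semi-discretized partially dissipative wave system have
negative real part: for any square root `w` of `R²b² + (a⁻ + a⁺)²`,
`Re(R·b - (a⁻ - a⁺) + w) < 0`. -/
theorem wave_eigenvalue_re_neg (am ap : ℂ) (ham : 0 < am.re) (hap : ap.re < 0)
    (b : ℝ) (hb : b < 0) (R : ℝ) (hR : 0 < R) (w : ℂ)
    (hw : w ^ 2 = ((R : ℂ) * (b : ℂ)) ^ 2 + (am + ap) ^ 2) :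
    ((R : ℂ) * (b : ℂ) - (am - ap) + w).re < 0 := by
  by_contra hcon
  push_neg at hcon
  have h1 := congrArg Complex.re hw
  have h2 := congrArg Complex.im hw
  simp [pow_two, Complex.mul_re, Complex.mul_im, Complex.add_re, Complex.add_im,
    Complex.sub_re, Complex.ofReal_re, Complex.ofReal_im] at h1 h2 hcon
  set u := w.re with hu
  set v := w.im with hv
  set p := am.re
  set q := ap.re
  set x := am.im
  set y := ap.im
  set M : ℝ := p - q - R * b with hM
  have hrb : R * b < 0 := mul_neg_of_pos_of_neg hR hb
  have hpq : 0 < p * (-q) := mul_pos ham (by linarith)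
  have hMpos : 0 < M := by simp only [hM]; linarith
  have huM : M ≤ u := by linarith
  have huv : u * v = (p + q) * (x + y) := by linarith
  have key : -4 * (p * q) - 2 * (R * b) * (p - q) > 0 := by
    nlinarith [mul_pos (neg_pos.2 hrb) (by linarith : (0:ℝ) < p - q)]
  have hArx : (R*b)^2 < M^2 - (p+q)^2 := by simp only [hM]; nlinarith
  have hBX : (p+q)^2 < M^2 - (R*b)^2 := by simp only [hM]; nlinarith
  have hApos : 0 < M^2 - (p+q)^2 := lt_of_le_of_lt (sq_nonneg _) hArx
  have hAB : (R*b)^2 * (p+q)^2 < (M^2 - (p+q)^2) * (M^2 - (R*b)^2) :=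
    calc (R*b)^2 * (p+q)^2 ≤ (M^2 - (p+q)^2) * (p+q)^2 :=
          mul_le_mul_of_nonneg_right hArx.le (sq_nonneg _)
      _ < (M^2 - (p+q)^2) * (M^2 - (R*b)^2) := mul_lt_mul_of_pos_left hBX hApos
  have hE2 : 0 < M^4 - ((R*b)^2 + ((p+q)^2 - (x+y)^2)) * M^2 - ((p+q)*(x+y))^2 := by
    have hid : M^4 - ((R*b)^2 + ((p+q)^2 - (x+y)^2)) * M^2 - ((p+q)*(x+y))^2
        = (M^2 - (p+q)^2) * (M^2 - (R*b)^2) - (R*b)^2*(p+q)^2 + (x+y)^2 * (M^2 - (p+q)^2) := by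
      ring
    rw [hid]
    have := mul_nonneg (sq_nonneg (x+y)) hApos.le
    linarith
  have hE1 : M^4 - ((R*b)^2 + ((p+q)^2 - (x+y)^2)) * M^2 - ((p+q)*(x+y))^2
      = -((u^2 - M^2) * (M^2 + v^2)) := by
    rw [← huv]
    have h1' : (R*b)^2 + ((p+q)^2 - (x+y)^2) = u^2 - v^2 := by linear_combination -h1
    rw [h1']; ring
  have hM2 : M^2 ≤ u^2 := by nlinarith
  have hfin : (0:ℝ) ≤ (u^2 - M^2) * (M^2 + v^2) :=
    mul_nonneg (by linarith) (by positivity)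
  linarith [hE1 ▸ hE2]
end
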